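/- Let β = (β_0, ..., β_{2k}) ∈ ℝ^{2k+1} and A_β = (β_{i+j})_{i,j=0}^{k} its Hankel matrix. Suppose A_β is positive semidefinite and singular, and let rank β := min{ i : column v_i of A_β lies in the span of columns v_0,...,v_{i-1} }. Then rank β = min{ j : 0 ≤ j ≤ k and A_β(j) is singular }, where A_β(j) = (β_{i+l})_{i,l=0}^{j} is the leading principal (j+1)×(j+1) submatrix. -/
import Mathlib


open Matrix

/-- The (k+1)×(k+1) Hankel matrix of a sequence β = (β₀,...,β₂ₖ). -/
def hankel {k : ℕ} (β : Fin (2*k+1) → ℝ) : Matrix (Fin (k+1)) (Fin (k+1)) ℝ :=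
  fun i j => β ⟨i.1 + j.1, by have := i.2; have := j.2; omega⟩

/-- The leading principal (j+1)×(j+1) submatrix A(j) of a (k+1)×(k+1) matrix, j ≤ k. -/
def leadSub {k : ℕ} (A : Matrix (Fin (k+1)) (Fin (k+1)) ℝ) (j : ℕ) (h : j ≤ k) :
    Matrix (Fin (j+1)) (Fin (j+1)) ℝ :=
  A.submatrix (Fin.castLE (by omega)) (Fin.castLE (by omega))

/-- The leading principal r×r submatrix of a (k+1)×(k+1) matrix, r ≤ k+1. -/
def leadSq {k : ℕ} (A : Matrix (Fin (k+1)) (Fin (k+1)) ℝ) (r : ℕ) (h : r ≤ k+1) :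
    Matrix (Fin r) (Fin r) ℝ :=
  A.submatrix (Fin.castLE h) (Fin.castLE h)

/-- The rank of a sequence via its Hankel matrix: k+1 if the matrix is nonsingular, and
otherwise the least index i whose column lies in the span of the preceding columns. -/
noncomputable def hankelRank {k : ℕ} (A : Matrix (Fin (k+1)) (Fin (k+1)) ℝ) : ℕ :=
  if A.det ≠ 0 then k+1
  else sInf {i : ℕ | ∃ h : i < k+1,
    (fun r => A r ⟨i, h⟩) ∈ Submodule.span ℝ
      {c : Fin (k+1) → ℝ | ∃ j : Fin (k+1), j.1 < i ∧ c = fun r => A r j}}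

/-- The truncation (β₀,...,β₂₍ₖ₋₁₎) of (β₀,...,β₂ₖ). -/
def trunc {k : ℕ} (β : Fin (2*k+1) → ℝ) : Fin (2*(k-1)+1) → ℝ :=
  fun i => β ⟨i.1, by have := i.2; omega⟩


lemma sum_trunc {m n : ℕ} (h : m ≤ n) (f : Fin n → ℝ)
    (hf : ∀ l : Fin n, ¬ l.1 < m → f l = 0) :
    ∑ l : Fin n, f l = ∑ l : Fin m, f (Fin.castLE h l) := by
  calc ∑ l : Fin n, f l
      = ∑ l ∈ Finset.univ.map (Fin.castLEEmb h), f l := by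
        symm
        apply Finset.sum_subset (Finset.subset_univ _)
        intro x _ hx
        exact hf x fun hxm => hx (Finset.mem_map.mpr ⟨⟨x.1, hxm⟩, Finset.mem_univ _, rfl⟩)
    _ = ∑ l : Fin m, f (Fin.castLE h l) := Finset.sum_map _ _ _

lemma mulVec_trunc {m n : ℕ} (h : m ≤ n) (A : Matrix (Fin n) (Fin n) ℝ) (v : Fin n → ℝ)
    (hv : ∀ l : Fin n, ¬ l.1 < m → v l = 0) (r : Fin m) :
    (A.submatrix (Fin.castLE h) (Fin.castLE h) *ᵥ fun l => v (Fin.castLE h l)) r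
      = (A *ᵥ v) (Fin.castLE h r) := by
  simp only [Matrix.mulVec, dotProduct, Matrix.submatrix_apply]
  exact (sum_trunc h (fun l => A (Fin.castLE h r) l * v l)
    (fun l hl => by simp [hv l hl])).symm

lemma dot_trunc {m n : ℕ} (h : m ≤ n) (v w : Fin n → ℝ)
    (hv : ∀ l : Fin n, ¬ l.1 < m → v l = 0) :
    v ⬝ᵥ w = (fun l => v (Fin.castLE h l)) ⬝ᵥ (fun l => w (Fin.castLE h l)) := by
  simp only [dotProduct]
  exact sum_trunc h (fun l => v l * w l) (fun l hl => by simp [hv l hl])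

lemma mulVec_eq_sum_cols {n : ℕ} (A : Matrix (Fin n) (Fin n) ℝ) (v : Fin n → ℝ) :
    (∑ l : Fin n, v l • (fun r => A r l)) = A *ᵥ v := by
  funext r
  rw [Finset.sum_apply]
  simp only [Pi.smul_apply, smul_eq_mul, Matrix.mulVec, dotProduct]
  exact Finset.sum_congr rfl fun l _ => mul_comm _ _

lemma lemA {k : ℕ} (A : Matrix (Fin (k+1)) (Fin (k+1)) ℝ) {i : ℕ} (hik : i < k+1)
    (hmem : (fun r => A r ⟨i, hik⟩) ∈ Submodule.span ℝ
      {c : Fin (k+1) → ℝ | ∃ j : Fin (k+1), j.1 < i ∧ c = fun r => A r j}) :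
    (leadSub A i (by omega)).det = 0 := by
  classical
  set G : Set (Fin (k+1) → ℝ) :=
    {c : Fin (k+1) → ℝ | ∃ j : Fin (k+1), j.1 < i ∧ c = fun r => A r j} with hG
  set ψ : Fin (k+1) → (Fin (k+1) → ℝ) :=
    fun l => if l.1 < i then (fun r => A r l) else 0 with hψ
  have hspan : Submodule.span ℝ G = Submodule.span ℝ (Set.range ψ) := by
    apply le_antisymm
    · apply Submodule.span_mono
      rintro c ⟨l, hl, rfl⟩
      exact ⟨l, by simp [hψ, if_pos hl]⟩
    · rw [← Submodule.span_insert_zero (s := G)]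
      apply Submodule.span_mono
      rintro c ⟨l, rfl⟩
      by_cases hl : l.1 < i
      · exact Set.mem_insert_of_mem _ ⟨l, hl, by simp [hψ, if_pos hl]⟩
      · simp [hψ, if_neg hl]
  rw [hspan, Submodule.mem_span_range_iff_exists_fun] at hmem
  obtain ⟨c, hc⟩ := hmem
  set x : Fin (k+1) → ℝ :=
    fun l => if l.1 < i then c l else if l.1 = i then -1 else 0 with hx
  have hsum : ∑ l : Fin (k+1), x l • (fun r => A r l) = 0 := by
    have hterm : ∀ l : Fin (k+1), x l • (fun r => A r l)
        = c l • ψ l + (if l = ⟨i, hik⟩ then -(fun r => A r ⟨i, hik⟩) else 0) := by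
      intro l
      by_cases hl : l.1 < i
      · have hne : l ≠ ⟨i, hik⟩ := fun h => by simp [h] at hl
        simp [hx, hψ, if_pos hl, if_neg hne]
      · by_cases hle : l.1 = i
        · have heq : l = ⟨i, hik⟩ := Fin.ext hle
          simp [hx, hψ, if_neg hl, heq, if_pos]
        · have hne : l ≠ ⟨i, hik⟩ := fun h => hle (by simp [h])
          simp [hx, hψ, if_neg hl, if_neg hle, if_neg hne]
    rw [Finset.sum_congr rfl fun l _ => hterm l, Finset.sum_add_distrib, hc]
    simp
  rw [mulVec_eq_sum_cols] at hsum
  rw [← Matrix.exists_mulVec_eq_zero_iff]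
  refine ⟨fun l => x (Fin.castLE hik l), ?_, ?_⟩
  · intro h0
    have := congrFun h0 ⟨i, lt_add_one i⟩
    simp only [Pi.zero_apply] at this
    rw [hx] at this
    simp at this
  · funext r
    rw [show (leadSub A i (by omega : i ≤ k)) = A.submatrix (Fin.castLE hik) (Fin.castLE hik) from rfl]
    rw [mulVec_trunc hik A x (fun l hl => by
      rw [hx]; simp only
      rw [if_neg (by omega), if_neg (by omega)]) r]
    rw [hsum]; rfl

lemma lemB {k : ℕ} {A : Matrix (Fin (k+1)) (Fin (k+1)) ℝ} (hpsd : A.PosSemidef) {j : ℕ}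
    (hjk : j ≤ k) (hdet : (leadSub A j hjk).det = 0)
    (hmin : ∀ j', ∀ h' : j' ≤ k, (leadSub A j' h').det = 0 → j ≤ j') :
    (fun r => A r ⟨j, by omega⟩) ∈ Submodule.span ℝ
      {c : Fin (k+1) → ℝ | ∃ l : Fin (k+1), l.1 < j ∧ c = fun r => A r l} := by
  classical
  have hjk1 : j + 1 ≤ k + 1 := by omega
  obtain ⟨x, hxne, hx0⟩ := Matrix.exists_mulVec_eq_zero_iff.mpr hdet
  -- the last coordinate of the kernel vector is nonzero
  have hxj : x ⟨j, lt_add_one j⟩ ≠ 0 := by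
    intro hxj0
    rcases Nat.eq_zero_or_pos j with hj0 | hjpos
    · subst hj0
      apply hxne
      funext l
      rw [show l = ⟨0, Nat.zero_lt_one⟩ from Fin.ext (by omega)]
      exact hxj0
    · have hj'k : j - 1 ≤ k := by omega
      have hjj : (j - 1) + 1 ≤ j + 1 := by omega
      set x' : Fin ((j-1)+1) → ℝ := fun l => x (Fin.castLE hjj l) with hx'
      have hvzero : ∀ l : Fin (j+1), ¬ l.1 < (j-1)+1 → x l = 0 := by
        intro l hl
        have : l = ⟨j, lt_add_one j⟩ := Fin.ext (by show l.1 = j; omega)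
        rw [this]; exact hxj0
      have hx'ne : x' ≠ 0 := by
        intro h0
        apply hxne
        funext l
        by_cases hl : l.1 < (j-1)+1
        · have := congrFun h0 ⟨l.1, hl⟩
          simpa [hx', show Fin.castLE hjj ⟨l.1, hl⟩ = l from Fin.ext rfl] using this
        · exact hvzero l hl
      have hsub0 : (leadSub A (j-1) hj'k) *ᵥ x' = 0 := by
        funext r
        have heq : leadSub A (j-1) hj'k
            = (leadSub A j hjk).submatrix (Fin.castLE hjj) (Fin.castLE hjj) := rfl
        rw [heq, hx']
        rw [mulVec_trunc hjj (leadSub A j hjk) x hvzero r, hx0]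
        rfl
      have := hmin (j-1) hj'k (Matrix.exists_mulVec_eq_zero_iff.mp ⟨x', hx'ne, hsub0⟩)
      omega
  -- extend x by zeros
  set xt : Fin (k+1) → ℝ :=
    fun l => if h : l.1 < j+1 then x ⟨l.1, h⟩ else 0 with hxt
  have hxtzero : ∀ l : Fin (k+1), ¬ l.1 < j+1 → xt l = 0 := fun l hl => dif_neg hl
  have hxtcast : (fun l : Fin (j+1) => xt (Fin.castLE hjk1 l)) = x := by
    funext l
    have hc : (Fin.castLE hjk1 l).1 < j + 1 := l.2
    show (if h : (Fin.castLE hjk1 l).1 < j+1 then x ⟨(Fin.castLE hjk1 l).1, h⟩ else 0) = x l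
    rw [dif_pos hc]
    rfl
  have hAxt : A *ᵥ xt = 0 := by
    rw [← hpsd.dotProduct_mulVec_zero_iff]
    have hstar : star xt = xt := funext fun l => star_trivial _
    rw [hstar, dot_trunc hjk1 xt (A *ᵥ xt) hxtzero]
    have h2 : (fun l : Fin (j+1) => (A *ᵥ xt) (Fin.castLE hjk1 l))
        = leadSub A j hjk *ᵥ x := by
      funext l
      rw [← mulVec_trunc hjk1 A xt hxtzero l]
      rw [show (A.submatrix (Fin.castLE hjk1) (Fin.castLE hjk1)) = leadSub A j hjk from rfl]
      rw [hxtcast]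
    rw [hxtcast, h2, hx0, dotProduct_zero]
  -- deduce span membership
  have hsumcols : ∑ l : Fin (k+1), xt l • (fun r => A r l) = 0 := by
    rw [mulVec_eq_sum_cols, hAxt]
  set jF : Fin (k+1) := ⟨j, by omega⟩ with hjF
  have hxtjF : xt jF ≠ 0 := by
    have : xt jF = x ⟨j, lt_add_one j⟩ := by simp [hxt, hjF]
    rw [this]; exact hxj
  set M := Submodule.span ℝ
      {c : Fin (k+1) → ℝ | ∃ l : Fin (k+1), l.1 < j ∧ c = fun r => A r l} with hM
  have hrest : ∑ l ∈ Finset.univ.erase jF, xt l • (fun r => A r l) ∈ M := by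
    apply Submodule.sum_mem
    intro l hl
    have hlne : l ≠ jF := Finset.ne_of_mem_erase hl
    by_cases hlj : l.1 < j
    · exact Submodule.smul_mem _ _ (Submodule.subset_span ⟨l, hlj, rfl⟩)
    · have : xt l = 0 := by
        apply hxtzero
        intro hcon
        exact hlne (Fin.ext (by show l.1 = j; omega))
      rw [this, zero_smul]
      exact Submodule.zero_mem _
  have hkey : xt jF • (fun r => A r jF) = -∑ l ∈ Finset.univ.erase jF, xt l • (fun r => A r l) := by
    have := Finset.add_sum_erase Finset.univ (fun l => xt l • (fun r => A r l)) (Finset.mem_univ jF)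
    rw [hsumcols] at this
    exact eq_neg_of_add_eq_zero_left this
  have hcol : (fun r => A r jF) ∈ M := by
    have h1 : (fun r => A r jF) = (xt jF)⁻¹ • (xt jF • (fun r => A r jF)) :=
      (inv_smul_smul₀ hxtjF _).symm
    rw [h1, hkey]
    exact Submodule.smul_mem _ _ (Submodule.neg_mem _ hrest)
  exact hcol

/-- For a psd singular Hankel matrix, the rank of the sequence equals the least size at which
a leading principal submatrix becomes singular. -/
theorem stmt7 {k : ℕ} (β : Fin (2*k+1) → ℝ) (hpsd : (hankel β).PosSemidef)
    (hsing : (hankel β).det = 0) :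
    hankelRank (hankel β) =
      sInf {j : ℕ | ∃ h : j ≤ k, (leadSub (hankel β) j h).det = 0} := by
  classical
  simp only [hankelRank, if_neg (not_not_intro hsing)]
  set S2 := {j : ℕ | ∃ h : j ≤ k, (leadSub (hankel β) j h).det = 0} with hS2
  have hkmem : k ∈ S2 :=
    ⟨le_refl k, by rw [show leadSub (hankel β) k (le_refl k) = hankel β from rfl]; exact hsing⟩
  obtain ⟨hjk, hjdet⟩ := Nat.sInf_mem (⟨k, hkmem⟩ : S2.Nonempty)
  have hmin : ∀ j', ∀ h' : j' ≤ k, (leadSub (hankel β) j' h').det = 0 → sInf S2 ≤ j' :=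
    fun j' h' hd => Nat.sInf_le ⟨h', hd⟩
  have hjS1 : sInf S2 ∈ {i : ℕ | ∃ h : i < k+1,
      (fun r => hankel β r ⟨i, h⟩) ∈ Submodule.span ℝ
        {c : Fin (k+1) → ℝ | ∃ j : Fin (k+1), j.1 < i ∧ c = fun r => hankel β r j}} :=
    ⟨by omega, lemB hpsd hjk hjdet hmin⟩
  apply le_antisymm
  · exact Nat.sInf_le hjS1
  · obtain ⟨hi, hmem⟩ := Nat.sInf_mem (⟨sInf S2, hjS1⟩ : Set.Nonempty _)
    exact hmin _ (by omega) (lemA (hankel β) hi hmem)
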